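/- arXiv:2401.06758 — 8 statements merged into one kernel-verified Lean document; each statement's English description precedes it below -/
import Mathlib

section
/- For every n ≥ 1 and every k with 1 ≤ k ≤ n, the partial derivative of the continuant polynomial satisfies ∂P_n(y_1,...,y_n)/∂y_k = P_{k-1}(y_1, ..., y_{k-1}) · P_{n-k}(y_{k+1}, ..., y_n). -/
/-- The continuant polynomial evaluated on a list:
`cont [] = 1`, `cont [a] = a`, `cont (a :: b :: l) = a * cont (b :: l) - cont l`. -/
def cont {R : Type*} [CommRing R] : List R → R
  | [] => 1
  | [a] => a
  | a :: b :: l => a * cont (b :: l) - cont l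


/-- The continuant polynomial `P_n` in the variables `X a, X (a+1), ..., X (a+n-1)`. -/
noncomputable def contX (a n : ℕ) : MvPolynomial ℕ ℤ :=
  cont ((List.range n).map fun i => MvPolynomial.X (a + i))

lemma contX_zero (a : ℕ) : contX a 0 = 1 := rfl

lemma contX_one (a : ℕ) : contX a 1 = MvPolynomial.X a := rfl

lemma range_two_add (n : ℕ) :
    List.range (n + 2) = 0 :: 1 :: (List.range n).map (fun i => i + 2) := by
  rw [List.range_succ_eq_map, List.range_succ_eq_map]
  simp [List.map_map, Function.comp]

lemma contX_rec (a n : ℕ) :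
    contX a (n + 2) = MvPolynomial.X a * contX (a + 1) (n + 1) - contX (a + 2) n := by
  unfold contX
  rw [range_two_add, List.range_succ_eq_map]
  simp only [List.map_cons, List.map_map, Function.comp, cont]
  have h1 : List.map ((fun i => MvPolynomial.X (a + i) : ℕ → MvPolynomial ℕ ℤ) ∘ fun i => i + 2) (List.range n)
      = List.map (fun i => MvPolynomial.X (a + 2 + i)) (List.range n) := by
    apply List.map_congr_left; intro i _; simp [Function.comp]; ring_nf
  have h2 : List.map ((fun i => MvPolynomial.X (a + 1 + i) : ℕ → MvPolynomial ℕ ℤ) ∘ Nat.succ) (List.range n)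
      = List.map ((fun i => MvPolynomial.X (a + i) : ℕ → MvPolynomial ℕ ℤ) ∘ fun i => i + 2) (List.range n) := by
    apply List.map_congr_left; intro i _; simp [Function.comp]; ring_nf
  rw [h2, h1]; simp

open MvPolynomial in
lemma pderiv_contX_vanish : ∀ n a k : ℕ, (k < a ∨ a + n ≤ k) → pderiv k (contX a n) = 0
  | 0, a, k, h => by simp [contX_zero]
  | 1, a, k, h => by
      rw [contX_one, pderiv_X_of_ne]; omega
  | (n+2), a, k, h => by
      rw [contX_rec, map_sub, pderiv_mul,
        pderiv_contX_vanish (n+1) (a+1) k (by omega),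
        pderiv_contX_vanish n (a+2) k (by omega),
        pderiv_X_of_ne (by omega)]
      ring

open MvPolynomial in
lemma pderiv_contX_main : ∀ n a k : ℕ, a ≤ k → k < a + n →
    pderiv k (contX a n) = contX a (k - a) * contX (k + 1) (a + n - 1 - k)
  | 0, a, k, h1, h2 => absurd h2 (by omega)
  | 1, a, k, h1, h2 => by
      have hk : k = a := by omega
      subst hk
      simp [contX_one, contX_zero, pderiv_X_self]
  | (n+2), a, k, h1, h2 => by
      rw [contX_rec, map_sub, pderiv_mul]
      rcases Nat.lt_or_ge k (a+2) with hk | hk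
      · rcases Nat.lt_or_ge k (a+1) with hk' | hk'
        · -- k = a
          have hka : k = a := by omega
          subst hka
          rw [pderiv_contX_vanish (n+1) (k+1) k (by omega),
            pderiv_contX_vanish n (k+2) k (by omega), pderiv_X_self]
          have h3 : k - k = 0 := by omega
          have h4 : k + (n+2) - 1 - k = n + 1 := by omega
          rw [h3, h4, contX_zero]
          ring
        · -- k = a + 1
          have hka : k = a + 1 := by omega
          subst hka
          rw [pderiv_contX_main (n+1) (a+1) (a+1) (by omega) (by omega),
            pderiv_contX_vanish n (a+2) (a+1) (by omega),
            pderiv_X_of_ne (by omega)]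
          have h3 : a + 1 - (a+1) = 0 := by omega
          have h4 : a + 1 + (n+1) - 1 - (a+1) = n := by omega
          have h5 : a + 1 - a = 1 := by omega
          have h6 : a + (n+2) - 1 - (a+1) = n := by omega
          rw [h3, h4, h5, h6, contX_zero, contX_one]
          ring
      · -- k ≥ a + 2
        obtain ⟨m, rfl⟩ : ∃ m, k = a + 2 + m := ⟨k - a - 2, by omega⟩
        rw [pderiv_contX_main (n+1) (a+1) (a+2+m) (by omega) (by omega),
          pderiv_contX_main n (a+2) (a+2+m) (by omega) (by omega),
          pderiv_X_of_ne (by omega)]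
        have h3 : a + 2 + m - (a+1) = m + 1 := by omega
        have h4 : a + 2 + m - (a+2) = m := by omega
        have h5 : a + 2 + m - a = m + 2 := by omega
        have h6 : a + 1 + (n+1) - 1 - (a+2+m) = a + (n+2) - 1 - (a+2+m) := by omega
        have h7 : a + 2 + n - 1 - (a+2+m) = a + (n+2) - 1 - (a+2+m) := by omega
        rw [h3, h4, h5, h6, h7, contX_rec]
        ring

/-- For `1 ≤ k ≤ n`, the formal partial derivative of the continuant polynomial:
`∂P_n(y_1,...,y_n)/∂y_k = P_{k-1}(y_1,...,y_{k-1}) · P_{n-k}(y_{k+1},...,y_n)`. -/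
theorem continuant_pderiv (n k : ℕ) (hn : 1 ≤ n) (hk1 : 1 ≤ k) (hk2 : k ≤ n) :
    MvPolynomial.pderiv k (contX 1 n) = contX 1 (k - 1) * contX (k + 1) (n - k) := by
  rw [pderiv_contX_main n 1 k (by omega) (by omega)]
  have h : 1 + n - 1 - k = n - k := by omega
  rw [h]
end

section
/- For every k ≥ 1, the degree-at-most-2 truncation of P_{4k+1}(y_1, ..., y_{4k+1}) equals y_1 + y_3 + ... + y_{4k+1}, i.e., the sum of the odd-indexed variables, with no constant term or degree-2 terms. -/
namespace ContAux

open MvPolynomial Finset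

/-- total degree of an exponent vector -/
def dg (d : ℕ →₀ ℕ) : ℕ := d.sum fun _ e => e

/-- agree on coefficients of degree ≤ 2 -/
def TE2 (p q : MvPolynomial ℕ ℤ) : Prop := ∀ d : ℕ →₀ ℕ, dg d ≤ 2 → coeff d p = coeff d q

/-- agree on coefficients of degree ≤ 1 -/
def TE1 (p q : MvPolynomial ℕ ℤ) : Prop := ∀ d : ℕ →₀ ℕ, dg d ≤ 1 → coeff d p = coeff d q

lemma TE1_of_TE2 {p q : MvPolynomial ℕ ℤ} (h : TE2 p q) : TE1 p q :=
  fun d hd => h d (le_trans hd one_le_two)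

lemma TE2_sub {p q p' q' : MvPolynomial ℕ ℤ} (h : TE2 p q) (h' : TE2 p' q') :
    TE2 (p - p') (q - q') := by
  intro d hd
  simp only [coeff_sub, h d hd, h' d hd]

lemma dg_add (d e : ℕ →₀ ℕ) : dg (d + e) = dg d + dg e := by
  unfold dg
  exact Finsupp.sum_add_index' (fun _ => rfl) (fun _ _ _ => rfl)

lemma dg_single (a b : ℕ) : dg (Finsupp.single a b) = b := by
  unfold dg
  exact Finsupp.sum_single_index rfl

lemma dg_sub_single {d : ℕ →₀ ℕ} {a : ℕ} (ha : a ∈ d.support) :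
    dg (d - Finsupp.single a 1) + 1 = dg d := by
  have hle : Finsupp.single a 1 ≤ d := by
    rw [Finsupp.single_le_iff]
    exact Nat.one_le_iff_ne_zero.2 (Finsupp.mem_support_iff.1 ha)
  have h : d - Finsupp.single a 1 + Finsupp.single a 1 = d := tsub_add_cancel_of_le hle
  conv_rhs => rw [← h]
  rw [dg_add, dg_single]

lemma TE2_X_mul {p q : MvPolynomial ℕ ℤ} (a : ℕ) (h : TE1 p q) :
    TE2 (X a * p) (X a * q) := by
  intro d hd
  rw [mul_comm (X a) p, mul_comm (X a) q, coeff_mul_X', coeff_mul_X']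
  split_ifs with ha
  · apply h
    have := dg_sub_single ha
    omega
  · rfl

/-- sum of `m` variables starting at `a`, step 2 -/
noncomputable def S (a m : ℕ) : MvPolynomial ℕ ℤ := ∑ i ∈ range m, X (a + 2 * i)

/-- the quadratic part appearing in even continuants -/
noncomputable def Q (a N : ℕ) : MvPolynomial ℕ ℤ :=
  ∑ i ∈ range N, ∑ j ∈ Finset.Ico i N, X (a + 2 * i) * X (a + 2 * j + 1)

lemma S_peel (a N : ℕ) : S a (N + 1) = X a + S (a + 2) N := by
  unfold S
  rw [Finset.sum_range_succ']
  rw [show a + 2 * 0 = a by omega, add_comm]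
  congr 1
  apply Finset.sum_congr rfl
  intro i _
  congr 1
  omega

lemma Q_peel (a N : ℕ) : Q a (N + 1) = X a * S (a + 1) (N + 1) + Q (a + 2) N := by
  unfold Q S
  rw [Finset.sum_range_succ']
  rw [add_comm]
  congr 1
  · rw [← Finset.range_eq_Ico, Finset.mul_sum]
    apply Finset.sum_congr rfl
    intro j _
    rw [show a + 2 * 0 = a by omega, show a + 2 * j + 1 = a + 1 + 2 * j by omega]
  · apply Finset.sum_congr rfl
    intro i _
    rw [Finset.sum_Ico_eq_sum_range, Finset.sum_Ico_eq_sum_range]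
    rw [show N + 1 - (i + 1) = N - i by omega]
    apply Finset.sum_congr rfl
    intro t _
    congr 1
    · congr 1; omega
    · congr 1; omega

lemma coeff_X_mul_X_eq_zero {d : ℕ →₀ ℕ} (hd : dg d ≤ 1) (i j : ℕ) :
    coeff d (X i * X j : MvPolynomial ℕ ℤ) = 0 := by
  have hx : (X i * X j : MvPolynomial ℕ ℤ) =
      monomial (Finsupp.single i 1 + Finsupp.single j 1) 1 := by
    rw [X, X, monomial_mul, one_mul]
  rw [hx, coeff_monomial]
  split_ifs with h
  · exfalso
    have h2 := congrArg dg h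
    rw [dg_add, dg_single, dg_single] at h2
    omega
  · rfl

lemma TE1_Q (a N : ℕ) : TE1 (Q a N) 0 := by
  intro d hd
  unfold Q
  rw [coeff_sum, coeff_zero]
  apply Finset.sum_eq_zero
  intro i _
  rw [coeff_sum]
  apply Finset.sum_eq_zero
  intro j _
  exact coeff_X_mul_X_eq_zero hd _ _

/-- the degree-≤2 truncation model of `contX a n` -/
noncomputable def M (a n : ℕ) : MvPolynomial ℕ ℤ :=
  if n % 4 = 0 then 1 - Q a (n / 2)
  else if n % 4 = 1 then S a (n / 2 + 1)
  else if n % 4 = 2 then -1 + Q a (n / 2)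
  else -S a (n / 2 + 1)

/-- the degree-≤1 truncation model -/
noncomputable def L (a n : ℕ) : MvPolynomial ℕ ℤ :=
  if n % 4 = 0 then 1
  else if n % 4 = 1 then S a (n / 2 + 1)
  else if n % 4 = 2 then -1
  else -S a (n / 2 + 1)

lemma M_0 (a m : ℕ) : M a (4 * m) = 1 - Q a (2 * m) := by
  unfold M
  rw [show (4 * m) % 4 = 0 by omega, show (4 * m) / 2 = 2 * m by omega]
  simp

lemma M_1 (a m : ℕ) : M a (4 * m + 1) = S a (2 * m + 1) := by
  unfold M
  rw [show (4 * m + 1) % 4 = 1 by omega, show (4 * m + 1) / 2 = 2 * m by omega]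
  simp

lemma M_2 (a m : ℕ) : M a (4 * m + 2) = -1 + Q a (2 * m + 1) := by
  unfold M
  rw [show (4 * m + 2) % 4 = 2 by omega, show (4 * m + 2) / 2 = 2 * m + 1 by omega]
  simp

lemma M_3 (a m : ℕ) : M a (4 * m + 3) = -S a (2 * m + 2) := by
  unfold M
  rw [show (4 * m + 3) % 4 = 3 by omega, show (4 * m + 3) / 2 = 2 * m + 1 by omega]
  simp

lemma L_0 (a m : ℕ) : L a (4 * m) = 1 := by
  unfold L
  rw [show (4 * m) % 4 = 0 by omega]
  simp

lemma L_1 (a m : ℕ) : L a (4 * m + 1) = S a (2 * m + 1) := by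
  unfold L
  rw [show (4 * m + 1) % 4 = 1 by omega, show (4 * m + 1) / 2 = 2 * m by omega]
  simp

lemma L_2 (a m : ℕ) : L a (4 * m + 2) = -1 := by
  unfold L
  rw [show (4 * m + 2) % 4 = 2 by omega]
  simp

lemma L_3 (a m : ℕ) : L a (4 * m + 3) = -S a (2 * m + 2) := by
  unfold L
  rw [show (4 * m + 3) % 4 = 3 by omega, show (4 * m + 3) / 2 = 2 * m + 1 by omega]
  simp

lemma TE1_M_L (a n : ℕ) : TE1 (M a n) (L a n) := by
  unfold M L
  split_ifs with h0 h1 h2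
  · intro d hd
    rw [coeff_sub, (TE1_Q a (n / 2)) d hd, coeff_zero, sub_zero]
  · intro d _; rfl
  · intro d hd
    rw [coeff_add, (TE1_Q a (n / 2)) d hd, coeff_zero, add_zero]
  · intro d _; rfl

lemma range_map_X (b m : ℕ) :
    ((List.range (m + 1)).map fun i => (X (b + i) : MvPolynomial ℕ ℤ)) =
      X b :: ((List.range m).map fun i => X (b + 1 + i)) := by
  rw [List.range_succ_eq_map, List.map_cons, List.map_map]
  have hf : ((fun i => (X (b + i) : MvPolynomial ℕ ℤ)) ∘ Nat.succ) =
      fun i => X (b + 1 + i) := by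
    funext i
    simp only [Function.comp_apply]
    congr 1
    omega
  rw [hf]
  norm_num

lemma contX_rec (a n : ℕ) :
    contX a (n + 2) = X a * contX (a + 1) (n + 1) - contX (a + 2) n := by
  unfold contX
  rw [range_map_X a (n + 1), range_map_X (a + 1) n]
  rfl

lemma contX_zero (a : ℕ) : contX a 0 = 1 := rfl

lemma contX_one (a : ℕ) : contX a 1 = X a := by
  unfold contX
  simp [cont]

/-- the exact polynomial identity behind the inductive step -/
lemma model_step (a n : ℕ) :
    X a * L (a + 1) (n + 1) - M (a + 2) n = M a (n + 2) := by
  obtain ⟨m, r, hr, hn⟩ : ∃ m r, r < 4 ∧ n = 4 * m + r := ⟨n / 4, n % 4, by omega, by omega⟩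
  interval_cases r
  · -- n = 4m, n+2 = 4m+2
    subst hn
    simp only [Nat.add_zero]
    rw [show 4 * m + 1 = 4 * m + 1 from rfl, L_1, M_0, M_2, Q_peel a (2 * m)]
    ring
  · -- n = 4m+1, n+2 = 4m+3
    subst hn
    rw [show 4 * m + 1 + 1 = 4 * m + 2 from rfl, show 4 * m + 1 + 2 = 4 * m + 3 from rfl,
      L_2, M_1, M_3, S_peel a (2 * m + 1)]
    ring
  · -- n = 4m+2, n+2 = 4(m+1)
    subst hn
    rw [show 4 * m + 2 + 1 = 4 * m + 3 from rfl, show 4 * m + 2 + 2 = 4 * (m + 1) by ring,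
      L_3, M_2, M_0, show 2 * (m + 1) = (2 * m + 1) + 1 by ring, Q_peel a (2 * m + 1),
      show 2 * m + 1 + 1 = 2 * m + 2 from rfl]
    ring
  · -- n = 4m+3, n+2 = 4(m+1)+1
    subst hn
    rw [show 4 * m + 3 + 1 = 4 * (m + 1) by ring, show 4 * m + 3 + 2 = 4 * (m + 1) + 1 by ring,
      L_0, M_3, M_1, show 2 * (m + 1) + 1 = (2 * m + 2) + 1 by ring, S_peel a (2 * m + 2)]
    ring

lemma step (n : ℕ) (IH1 : ∀ a, TE2 (contX a n) (M a n))
    (IH2 : ∀ a, TE2 (contX a (n + 1)) (M a (n + 1))) (a : ℕ) :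
    TE2 (contX a (n + 2)) (M a (n + 2)) := by
  rw [contX_rec]
  have key : TE2 (X a * contX (a + 1) (n + 1) - contX (a + 2) n)
      (X a * L (a + 1) (n + 1) - M (a + 2) n) := by
    apply TE2_sub _ (IH1 (a + 2))
    apply TE2_X_mul
    intro d hd
    rw [(TE1_of_TE2 (IH2 (a + 1))) d hd, (TE1_M_L (a + 1) (n + 1)) d hd]
  intro d hd
  rw [key d hd, model_step]

lemma main (n : ℕ) : ∀ a, TE2 (contX a n) (M a n) := by
  induction n using Nat.strong_induction_on with
  | _ n ih =>
    match n with
    | 0 =>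
      intro a d hd
      rw [contX_zero, show M a 0 = 1 - Q a (2 * 0) from M_0 a 0]
      unfold Q
      simp
    | 1 =>
      intro a d hd
      rw [contX_one, show M a 1 = S a (2 * 0 + 1) from M_1 a 0]
      unfold S
      simp
    | (n + 2) =>
      exact step n (fun a => ih n (by omega) a) (fun a => ih (n + 1) (by omega) a)

end ContAux

/-- For `k ≥ 1`, the degree-at-most-2 truncation of `P_{4k+1}(y_1, ..., y_{4k+1})`
equals `y_1 + y_3 + ... + y_{4k+1}`. -/
theorem continuant_trunc_4k1 (k : ℕ) (hk : 1 ≤ k) (d : ℕ →₀ ℕ)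
    (hd : (d.sum fun _ e => e) ≤ 2) :
    MvPolynomial.coeff d (contX 1 (4 * k + 1)) =
      MvPolynomial.coeff d (∑ i ∈ Finset.range (2 * k + 1), MvPolynomial.X (2 * i + 1)) := by
  have h := ContAux.main (4 * k + 1) 1 d hd
  rw [h, ContAux.M_1]
  unfold ContAux.S
  congr 1
  apply Finset.sum_congr rfl
  intro i _
  congr 1
  omega
end

section
/- Let K be a field, n = 2m even, and λ = (-1)^{m+1}. Then the only common zero of P_n(y_1,...,y_n) + λ and all its partial derivatives in K^n is the origin (0, ..., 0). -/
open MvPolynomial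

lemma cont_map {R S : Type*} [CommRing R] [CommRing S] (f : R →+* S) :
    ∀ l : List R, f (cont l) = cont (l.map f)
  | [] => by simp [cont]
  | [a] => by simp [cont]
  | a :: b :: l => by
    simp only [cont, List.map_cons, map_sub, map_mul]
    rw [cont_map f (b :: l), cont_map f l]
    simp [cont]

/-- Continuant of the sequence `x b, x (b+1), ..., x (b+k-1)`. -/
def FF {R : Type*} [CommRing R] (x : ℕ → R) (b k : ℕ) : R :=
  cont ((List.range k).map fun i => x (b + i))

section FF
variable {R : Type*} [CommRing R] (x : ℕ → R)

lemma range_map_eq (b k : ℕ) :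
    (List.range (k + 1)).map (fun i => x (b + i)) =
      x b :: (List.range k).map fun i => x (b + 1 + i) := by
  simp only [List.range_succ_eq_map, List.map_cons, List.map_map, Function.comp_def,
    Nat.add_zero]
  congr 1
  exact List.map_congr_left fun i _ => congrArg x (by omega)

@[simp] lemma FF_zero (b : ℕ) : FF x b 0 = 1 := by simp [FF, cont]

@[simp] lemma FF_one (b : ℕ) : FF x b 1 = x b := by simp [FF, cont]

lemma FF_rec (b k : ℕ) :
    FF x b (k + 2) = x b * FF x (b + 1) (k + 1) - FF x (b + 2) k := by
  unfold FF
  rw [range_map_eq x b (k + 1), range_map_eq x (b + 1) k]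
  simp only [show b + 1 + 1 = b + 2 by omega]
  simp [cont]

end FF

lemma contX_eq_FF (b k : ℕ) : contX b k = FF (fun i => (X i : MvPolynomial ℕ ℤ)) b k := rfl

lemma contX_rec_s9 (b k : ℕ) :
    contX b (k + 2) = X b * contX (b + 1) (k + 1) - contX (b + 2) k := by
  simp only [contX_eq_FF]; exact FF_rec _ b k

lemma aeval_contX {K : Type*} [CommRing K] (x : ℕ → K) (b k : ℕ) :
    MvPolynomial.aeval x (contX b k) = FF x b k := by
  rw [contX, show (MvPolynomial.aeval x) (cont ((List.range k).map fun i => X (b + i)))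
      = (MvPolynomial.aeval x).toRingHom (cont ((List.range k).map fun i => X (b + i))) from rfl,
    cont_map]
  simp [FF, List.map_map, Function.comp_def]

lemma pderiv_contX_lt (k : ℕ) : ∀ n b, k < b → pderiv k (contX b n) = 0
  | 0, b, h => by
    rw [show contX b 0 = 1 from rfl]
    simp [pderiv_one]
  | 1, b, h => by
    rw [show contX b 1 = X b by simp [contX, cont]]
    exact pderiv_X_of_ne (by omega)
  | n + 2, b, h => by
    rw [contX_rec_s9, map_sub, pderiv_mul, pderiv_X_of_ne (by omega : b ≠ k),
      pderiv_contX_lt k (n + 1) (b + 1) (by omega), pderiv_contX_lt k n (b + 2) (by omega)]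
    ring

lemma pderiv_contX (m : ℕ) : ∀ j b, pderiv (b + j) (contX b (j + 1 + m)) =
    contX b j * contX (b + j + 1) m
  | 0, b => by
    rcases m with _ | m
    · simp [show contX b 1 = X b by simp [contX, cont], pderiv_X_self,
        show contX b 0 = 1 from rfl, show contX (b+0+1) 0 = 1 from rfl]
    · rw [show (0:ℕ) + 1 + (m + 1) = m + 2 by omega, contX_rec_s9, map_sub, pderiv_mul,
        show b + 0 = b by omega, pderiv_X_self,
        pderiv_contX_lt b (m + 1) (b + 1) (by omega), pderiv_contX_lt b m (b + 2) (by omega),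
        show contX b 0 = 1 from rfl, show b + 0 + 1 = b + 1 by omega]
      ring
  | 1, b => by
    rw [show (1:ℕ) + 1 + m = m + 2 by omega, contX_rec_s9, map_sub, pderiv_mul,
      pderiv_X_of_ne (by omega : b ≠ b + 1)]
    have h1 : pderiv (b + 1) (contX (b + 1) (m + 1)) = contX (b + 2) m := by
      have := pderiv_contX m 0 (b + 1)
      rw [show (b:ℕ) + 1 + 0 = b + 1 by omega, show (0:ℕ) + 1 + m = m + 1 by omega,
        show contX (b+1) 0 = 1 from rfl, show b + 1 + 0 + 1 = b + 2 by omega, one_mul] at this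
      exact this
    rw [h1, pderiv_contX_lt (b + 1) m (b + 2) (by omega),
      show contX b 1 = X b by simp [contX, cont]]
    ring
  | j + 2, b => by
    rw [show (j:ℕ) + 2 + 1 + m = (j + 1 + m) + 2 by omega, contX_rec_s9, map_sub, pderiv_mul,
      pderiv_X_of_ne (by omega : b ≠ b + (j + 2))]
    have h1 : pderiv (b + (j + 2)) (contX (b + 1) (j + 1 + 1 + m)) =
        contX (b + 1) (j + 1) * contX (b + j + 3) m := by
      have := pderiv_contX m (j + 1) (b + 1)
      rw [show (b:ℕ) + 1 + (j + 1) = b + (j + 2) by omega,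
        show (b:ℕ) + (j + 2) + 1 = b + j + 3 by omega] at this
      exact this
    have h2 : pderiv (b + (j + 2)) (contX (b + 2) (j + 1 + m)) =
        contX (b + 2) j * contX (b + j + 3) m := by
      have := pderiv_contX m j (b + 2)
      rw [show (b:ℕ) + 2 + j = b + (j + 2) by omega,
        show (b:ℕ) + (j + 2) + 1 = b + j + 3 by omega] at this
      exact this
    rw [show (j:ℕ) + 1 + m + 1 = j + 1 + 1 + m by omega, h1, h2,
      show contX b (j + 2) = X b * contX (b + 1) (j + 1) - contX (b + 2) j from contX_rec_s9 b j,
      show b + (j + 2) + 1 = b + j + 3 by omega]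
    ring

section FFK
variable {K : Type*} [Field K] (x : ℕ → K)

lemma FF_split : ∀ p b q, FF x b (p + 1 + (q + 1)) =
    FF x b (p + 1) * FF x (b + p + 1) (q + 1) - FF x b p * FF x (b + p + 2) q
  | 0, b, q => by
    rw [show (0:ℕ) + 1 + (q + 1) = q + 2 by omega, FF_rec, FF_one, FF_zero,
      show b + 0 + 1 = b + 1 by omega, show b + 0 + 2 = b + 2 by omega]
    ring
  | 1, b, q => by
    rw [show (1:ℕ) + 1 + (q + 1) = (q + 1) + 2 by omega, FF_rec]
    have h1 := FF_split 0 (b + 1) q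
    rw [show (0:ℕ) + 1 + (q + 1) = q + 1 + 1 by omega] at h1
    rw [h1, show b + 1 + 0 + 1 = b + 2 by omega, show b + 1 + 0 + 2 = b + 3 by omega,
      show FF x b 2 = x b * FF x (b+1) 1 - FF x (b+2) 0 from FF_rec x b 0,
      show b + 1 + 1 = b + 2 by omega, show b + 1 + 2 = b + 3 by omega]
    simp only [Nat.zero_add, FF_zero, FF_one]
    ring
  | p + 2, b, q => by
    rw [show (p:ℕ) + 2 + 1 + (q + 1) = (p + q + 2) + 2 by omega, FF_rec]
    have h1 := FF_split (p + 1) (b + 1) q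
    have h2 := FF_split p (b + 2) q
    rw [show (p:ℕ) + 1 + 1 + (q + 1) = p + q + 2 + 1 by omega,
      show b + 1 + (p + 1) + 1 = b + p + 3 by omega,
      show b + 1 + (p + 1) + 2 = b + p + 4 by omega] at h1
    rw [show (p:ℕ) + 1 + (q + 1) = p + q + 2 by omega,
      show b + 2 + p + 1 = b + p + 3 by omega,
      show b + 2 + p + 2 = b + p + 4 by omega] at h2
    rw [h1, h2,
      show FF x b (p + 3) = x b * FF x (b+1) (p+2) - FF x (b+2) (p+1) from FF_rec x b (p+1),
      show FF x b (p + 2) = x b * FF x (b+1) (p+1) - FF x (b+2) p from FF_rec x b p,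
      show b + (p + 2) + 1 = b + p + 3 by omega, show b + (p + 2) + 2 = b + p + 4 by omega]
    ring

lemma FF_zodd : ∀ r b, (∀ i, i < 2 * r → x (b + i) = 0) →
    FF x b (2 * r + 1) = (-1 : K) ^ r * x (b + 2 * r)
  | 0, b, h => by simp
  | r + 1, b, h => by
    have hb : x b = 0 := by simpa using h 0 (by omega)
    rw [show 2 * (r + 1) + 1 = (2 * r + 1) + 2 by omega, FF_rec, hb, zero_mul, zero_sub,
      FF_zodd r (b + 2) (fun i hi => by
        have := h (i + 2) (by omega); rwa [show b + (i + 2) = b + 2 + i by omega] at this),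
      show b + 2 + 2 * r = b + 2 * (r + 1) by omega]
    ring

lemma FF_zeven : ∀ r b, (∀ i, i < 2 * r + 1 → x (b + i) = 0) →
    FF x b (2 * r + 2) = (-1 : K) ^ (r + 1)
  | 0, b, h => by
    have hb : x b = 0 := by simpa using h 0 (by omega)
    rw [show (2:ℕ) * 0 + 2 = 0 + 2 by omega, FF_rec, hb]
    simp
  | r + 1, b, h => by
    have hb : x b = 0 := by simpa using h 0 (by omega)
    rw [show 2 * (r + 1) + 2 = (2 * r + 2) + 2 by omega, FF_rec, hb, zero_mul, zero_sub,
      FF_zeven r (b + 2) (fun i hi => by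
        have := h (i + 2) (by omega); rwa [show b + (i + 2) = b + 2 + i by omega] at this)]
    ring

end FFK

/-- For `n = 2m` even and `λ = (-1)^{m+1}`, the only common zero in `K^n` of
`P_n + λ` and all its partial derivatives is the origin. -/
theorem continuant_hypersurface_isolated_singularity {K : Type*} [Field K] (m : ℕ)
    (lam : K) (hlam : lam = (-1 : K) ^ (m + 1)) (a : ℕ → K)
    (h0 : MvPolynomial.aeval a (contX 1 (2 * m)) + lam = 0)
    (hd : ∀ k : ℕ, MvPolynomial.aeval a (MvPolynomial.pderiv k (contX 1 (2 * m))) = 0) :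
    ∀ k : ℕ, 1 ≤ k → k ≤ 2 * m → a k = 0 := by
  have hne : ∀ t : ℕ, ((-1 : K) ^ t) ≠ 0 := fun t => pow_ne_zero t (by norm_num)
  have hF0 : FF a 1 (2 * m) = (-1 : K) ^ m := by
    rw [aeval_contX] at h0
    have : FF a 1 (2 * m) = -lam := by linear_combination h0
    rw [this, hlam, pow_succ]
    ring
  have HD : ∀ j q : ℕ, j + 1 + q = 2 * m → FF a 1 j * FF a (j + 2) q = 0 := by
    intro j q h
    have h1 := hd (1 + j)
    rw [← h, pderiv_contX q j 1, map_mul, aeval_contX, aeval_contX,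
      show (1:ℕ) + j + 1 = j + 2 by omega] at h1
    exact h1
  have T : ∀ r s : ℕ, r + s = m →
      FF a 1 (2 * r) = (-1 : K) ^ r ∧ FF a (2 * r + 1) (2 * s) = (-1 : K) ^ (m + r) ∧
      (1 ≤ r → FF a (2 * r) (2 * s + 1) = 0) ∧ (∀ j, 1 ≤ j → j < 2 * r → a j = 0) := by
    intro r
    induction r with
    | zero =>
      intro s hs
      refine ⟨by simp, ?_, by omega, by omega⟩
      rw [show s = m by omega, show (2:ℕ) * 0 + 1 = 1 by omega, hF0]
      norm_num
    | succ r ih =>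
      intro s hs
      obtain ⟨A, B, Fh, C⟩ := ih (s + 1) (by omega)
      -- S1 : suffix of odd length starting at 2r+2 vanishes
      have S1 : FF a (2 * r + 2) (2 * s + 1) = 0 := by
        have h1 := HD (2 * r) (2 * s + 1) (by omega)
        rw [A] at h1
        exact (mul_eq_zero.mp h1).resolve_left (hne r)
      -- a (2r) = 0 when r ≥ 1
      have a2r : 1 ≤ r → a (2 * r) = 0 := by
        intro hr
        have h2 := Fh hr
        rw [show 2 * (s + 1) + 1 = (2 * s + 1) + 2 by omega, FF_rec,
          show (2:ℕ) * s + 1 + 1 = 2 * (s + 1) by omega, B, S1, sub_zero] at h2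
        exact (mul_eq_zero.mp h2).resolve_right (hne (m + r))
      -- value of the next even suffix
      have hY : FF a (2 * r + 3) (2 * s) = (-1 : K) ^ (m + r + 1) := by
        have hsplit := FF_split a (2 * r) 1 (2 * s)
        rw [show 2 * r + 1 + (2 * s + 1) = 2 * m by omega,
          show (1:ℕ) + 2 * r + 1 = 2 * r + 2 by omega,
          show (1:ℕ) + 2 * r + 2 = 2 * r + 3 by omega, hF0, S1, A, mul_zero, zero_sub] at hsplit
        have hvv : (-1 : K) ^ r * (-1 : K) ^ r = 1 := by
          rw [← pow_add, ← two_mul, pow_mul]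
          norm_num
        have expand : (-1 : K) ^ (m + r + 1) = -((-1 : K) ^ m * (-1 : K) ^ r) := by
          rw [pow_succ, pow_add]; ring
        rw [expand]
        linear_combination ((-1 : K) ^ r) * hsplit - (FF a (2 * r + 3) (2 * s)) * hvv
      -- odd prefix vanishes
      have F1odd : FF a 1 (2 * r + 1) = 0 := by
        have h3 := HD (2 * r + 1) (2 * s) (by omega)
        rw [show (2:ℕ) * r + 1 + 2 = 2 * r + 3 by omega, hY] at h3
        exact (mul_eq_zero.mp h3).resolve_right (hne (m + r + 1))
      have hzero : ∀ i, i < 2 * r → a (1 + i) = 0 := by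
        intro i hi
        rcases Nat.lt_or_ge (1 + i) (2 * r) with h | h
        · exact C (1 + i) (by omega) h
        · rw [show 1 + i = 2 * r by omega]
          exact a2r (by omega)
      have a2r1 : a (2 * r + 1) = 0 := by
        have h5 := FF_zodd a r 1 hzero
        rw [F1odd] at h5
        have := (mul_eq_zero.mp h5.symm).resolve_left (hne r)
        rwa [show (1:ℕ) + 2 * r = 2 * r + 1 by omega] at this
      refine ⟨?_, ?_, ?_, ?_⟩
      · rw [show 2 * (r + 1) = 2 * r + 2 by omega]
        exact FF_zeven a r 1 (by
          intro i hi
          rcases Nat.lt_or_ge i (2 * r) with h | h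
          · exact hzero i h
          · rw [show (1:ℕ) + i = 2 * r + 1 by omega]
            exact a2r1)
      · rw [show 2 * (r + 1) + 1 = 2 * r + 3 by omega, show m + (r + 1) = m + r + 1 by omega]
        exact hY
      · intro _
        rw [show 2 * (r + 1) = 2 * r + 2 by omega]
        exact S1
      · intro j hj1 hj2
        rcases Nat.lt_or_ge j (2 * r) with h | h
        · exact C j hj1 h
        · rcases Nat.lt_or_ge j (2 * r + 1) with h' | h'
          · rw [show j = 2 * r by omega]
            exact a2r (by omega)
          · rw [show j = 2 * r + 1 by omega]
            exact a2r1
  intro k hk1 hk2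
  obtain ⟨A, B, Fh, C⟩ := T m 0 (by omega)
  rcases Nat.lt_or_ge k (2 * m) with h | h
  · exact C k hk1 h
  · have hk : k = 2 * m := by omega
    have hm : 1 ≤ m := by omega
    have := Fh hm
    rw [show (2:ℕ) * 0 + 1 = 1 by omega, FF_one] at this
    rw [hk]
    exact this
end

section
/- Let K be a field of characteristic ≠ 2 and let λ ∈ K be nonzero. Then the K-algebra R = K[z_1,...,z_{n-1},u_1,u_2,u_3]/⟨g, h⟩ with g = (u_1 u_2 - λ)u_3 - μ u_1² - P_{n-2}(z_1,...,z_{n-2}) and h = u_1 u_2 - λ - P_{n-1}(z_1,...,z_{n-1}) (μ ∈ K nonzero) has the property: at any common zero of g, h and all 2×2 minors of the Jacobian of (g,h), one has u_1 = u_2 = 0. -/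
open MvPolynomial in
lemma pderiv_cont_eq_zero {K : Type*} [CommRing K] (v : ℕ) :
    ∀ l : List (MvPolynomial ℕ K), (∀ q ∈ l, pderiv v q = 0) →
      pderiv v (cont l) = 0
  | [], _ => by simp [cont]
  | [a], h => by simpa [cont] using h a (by simp)
  | a :: b :: l, h => by
    have h1 : pderiv v a = 0 := h a (by simp)
    have h2 := pderiv_cont_eq_zero v (b :: l) (fun q hq => h q (by simp [hq]))
    have h3 := pderiv_cont_eq_zero v l (fun q hq => h q (by simp [hq]))
    simp [cont, h1, h2, h3]

open MvPolynomial in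
/-- Type Bₙ: at any common zero of `g`, `h` and all 2×2 minors of the Jacobian of
`(g, h)`, one has `u₁ = u₂ = 0` (characteristic ≠ 2).  Here the variables are
`z_i = X i` for `1 ≤ i ≤ n-1`, `u₁ = X n`, `u₂ = X (n+1)`, `u₃ = X (n+2)`. -/
theorem typeB_singular_forces_u_zero {K : Type*} [Field K] (h2 : (2 : K) ≠ 0)
    (lam mu : K) (hlam : lam ≠ 0) (hmu : mu ≠ 0) (n : ℕ) (hn : 2 ≤ n)
    (g h : MvPolynomial ℕ K)
    (hg : g = (X n * X (n + 1) - C lam) * X (n + 2) - C mu * (X n) ^ 2 -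
      cont ((List.range (n - 2)).map fun i => X (1 + i)))
    (hh : h = X n * X (n + 1) - C lam -
      cont ((List.range (n - 1)).map fun i => X (1 + i)))
    (p : ℕ → K) (hgp : aeval p g = 0) (hhp : aeval p h = 0)
    (hmin : ∀ v w : ℕ,
      aeval p (pderiv v g * pderiv w h - pderiv w g * pderiv v h) = 0) :
    p n = 0 ∧ p (n + 1) = 0 := by
  have hQ : ∀ (v m : ℕ), n ≤ v → m ≤ n - 1 →
      pderiv v (cont ((List.range m).map fun i => (X (1 + i) : MvPolynomial ℕ K))) = 0 := by
    intro v m hv hm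
    apply pderiv_cont_eq_zero
    intro q hq
    obtain ⟨i, hi, rfl⟩ := List.mem_map.1 hq
    rw [List.mem_range] at hi
    have : 1 + i ≠ v := by omega
    exact pderiv_X_of_ne this
  have hQg := hQ n (n - 2) le_rfl (by omega)
  have hQg1 := hQ (n + 1) (n - 2) (by omega) (by omega)
  have hQg2 := hQ (n + 2) (n - 2) (by omega) (by omega)
  have hQh := hQ n (n - 1) le_rfl le_rfl
  have hQh1 := hQ (n + 1) (n - 1) (by omega) le_rfl
  have hQh2 := hQ (n + 2) (n - 1) (by omega) le_rfl
  have hne1 : (n : ℕ) ≠ n + 1 := by omega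
  have hne2 : (n + 1 : ℕ) ≠ n := by omega
  have hne3 : (n : ℕ) ≠ n + 2 := by omega
  have hne4 : (n + 2 : ℕ) ≠ n := by omega
  have hne5 : (n + 1 : ℕ) ≠ n + 2 := by omega
  have hne6 : (n + 2 : ℕ) ≠ n + 1 := by omega
  have key1 := hmin n (n + 1)
  have key2 := hmin (n + 2) n
  rw [hg, hh] at key1 key2
  simp only [map_sub, map_mul, map_pow, Derivation.leibniz, Derivation.leibniz_pow,
    pderiv_X_self, pderiv_X_of_ne hne1, pderiv_X_of_ne hne2, pderiv_X_of_ne hne3,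
    pderiv_X_of_ne hne4, pderiv_X_of_ne hne5, pderiv_X_of_ne hne6, pderiv_C,
    hQg, hQg1, hQg2, hQh, hQh1, hQh2, smul_eq_mul, mul_zero, zero_mul, mul_one, one_mul,
    sub_zero, zero_sub, add_zero, zero_add, map_zero, map_add, map_mul, map_neg,
    smul_zero, two_smul, pow_one, Nat.sub_self, Algebra.algebraMap_self_apply,
    map_ofNat, map_natCast, aeval_X, aeval_C] at key1 key2
  norm_num at key1 key2
  have ha : p n = 0 := by
    have h0 : (2 : K) * mu * (p n * p n) = 0 := by ring_nf; ring_nf at key1; linear_combination -key1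
    rcases mul_eq_zero.1 h0 with h' | h'
    · exact absurd h' (mul_ne_zero h2 hmu)
    · rcases mul_eq_zero.1 h' with h'' | h'' <;> exact h''
  refine ⟨ha, ?_⟩
  rw [ha] at key2
  norm_num at key2
  rcases key2 with h' | h'
  · simp [h'] at hlam
  · simpa using h'
end

section
/- Let K be a field, a, b nonzero integers, and η_1, η_2 ∈ K^× such that there exist γ_a, γ_b, ρ_a, ρ_b ∈ K with γ_a^a = η_2, γ_b^b = η_1, ρ_a^a = -1, ρ_b^b = -1. Then the K-algebra K[x_1, x_2, y_1, y_2]/⟨x_1 y_1 - η_1 - x_2^b, x_2 y_2 - η_2 - x_1^a⟩ is isomorphic as a K-algebra to K[w_1, w_2, z_1, z_2]/⟨w_1 z_1 - 1 + w_2^b, w_2 z_2 - 1 + w_1^a⟩. -/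
open MvPolynomial in
/-- The fiber of the rank-two cluster algebra with principal coefficients over
coefficient values `(η₁, η₂)` is isomorphic to the fiber with trivial coefficients,
provided the required roots `γ_a, γ_b, ρ_a, ρ_b` exist in `K`. -/
theorem rank_two_fiber_iso {K : Type*} [Field K] (a b : ℕ) (ha : a ≠ 0) (hb : b ≠ 0)
    (η₁ η₂ γa γb ρa ρb : K) (hη₁ : η₁ ≠ 0) (hη₂ : η₂ ≠ 0)
    (hγa : γa ^ a = η₂) (hγb : γb ^ b = η₁) (hρa : ρa ^ a = -1) (hρb : ρb ^ b = -1) :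
    Nonempty
      ((MvPolynomial (Fin 4) K ⧸ Ideal.span
          ({X 0 * X 2 - C η₁ - (X 1) ^ b, X 1 * X 3 - C η₂ - (X 0) ^ a} :
            Set (MvPolynomial (Fin 4) K))) ≃ₐ[K]
        (MvPolynomial (Fin 4) K ⧸ Ideal.span
          ({X 0 * X 2 - 1 + (X 1) ^ b, X 1 * X 3 - 1 + (X 0) ^ a} :
            Set (MvPolynomial (Fin 4) K)))) := by
  -- nonvanishing of the roots
  have hγa0 : γa ≠ 0 := fun h => hη₂ (by rw [← hγa, h, zero_pow ha])
  have hγb0 : γb ≠ 0 := fun h => hη₁ (by rw [← hγb, h, zero_pow hb])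
  have hρa0 : ρa ≠ 0 := fun h => (neg_ne_zero.mpr (one_ne_zero (α := K))) (by rw [← hρa, h, zero_pow ha])
  have hρb0 : ρb ≠ 0 := fun h => (neg_ne_zero.mpr (one_ne_zero (α := K))) (by rw [← hρb, h, zero_pow hb])
  set u : K := γa * ρa with hu
  set v : K := γb * ρb with hv
  have hu0 : u ≠ 0 := mul_ne_zero hγa0 hρa0
  have hv0 : v ≠ 0 := mul_ne_zero hγb0 hρb0
  -- scalar vectors
  set c : Fin 4 → K := ![u, v, η₁ * u⁻¹, η₂ * v⁻¹] with hc
  have hc0 : ∀ i, c i ≠ 0 := by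
    intro i
    fin_cases i <;>
      simp [hc, hu0, hv0, hη₁, hη₂]
  -- scaling hom and its inverse
  set f : MvPolynomial (Fin 4) K →ₐ[K] MvPolynomial (Fin 4) K :=
    aeval (fun i => MvPolynomial.C (c i) * X i) with hf
  set g : MvPolynomial (Fin 4) K →ₐ[K] MvPolynomial (Fin 4) K :=
    aeval (fun i => MvPolynomial.C (c i)⁻¹ * X i) with hg
  have hfg : f.comp g = AlgHom.id K _ := by
    apply MvPolynomial.algHom_ext
    intro i
    simp only [hf, hg, AlgHom.comp_apply, aeval_X, map_mul, aeval_C, algebraMap_eq, AlgHom.id_apply]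
    rw [← mul_assoc, ← C_mul]
    rw [inv_mul_cancel₀ (hc0 i), C_1, one_mul]
  have hgf : g.comp f = AlgHom.id K _ := by
    apply MvPolynomial.algHom_ext
    intro i
    simp only [hf, hg, AlgHom.comp_apply, aeval_X, map_mul, aeval_C, algebraMap_eq, AlgHom.id_apply]
    rw [← mul_assoc, ← C_mul]
    rw [mul_inv_cancel₀ (hc0 i), C_1, one_mul]
  set e : MvPolynomial (Fin 4) K ≃ₐ[K] MvPolynomial (Fin 4) K :=
    AlgEquiv.ofAlgHom f g hfg hgf with he
  -- scalar computations
  have huc : u * (η₁ * u⁻¹) = η₁ := by field_simp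
  have hvc : v * (η₂ * v⁻¹) = η₂ := by field_simp
  have hvb : v ^ b = -η₁ := by rw [hv, mul_pow, hγb, hρb]; ring
  have hua : u ^ a = -η₂ := by rw [hu, mul_pow, hγa, hρa]; ring
  -- images of the generators
  have key1 : f (X 0 * X 2 - C η₁ - (X 1) ^ b)
      = C η₁ * (X 0 * X 2 - 1 + (X 1) ^ b) := by
    simp only [hf, map_sub, map_mul, map_pow, aeval_X, hc,
      Matrix.cons_val_zero, Matrix.cons_val_one, Matrix.head_cons,
      Matrix.cons_val_two, Matrix.tail_cons, aeval_C, algebraMap_eq]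
    rw [mul_pow, ← C_pow, hvb, C_neg]
    have h : (C u : MvPolynomial (Fin 4) K) * C u⁻¹ = 1 := by
      rw [← C_mul, mul_inv_cancel₀ hu0, C_1]
    linear_combination (C η₁ * X 0 * X 2 : MvPolynomial (Fin 4) K) * h
  have key2 : f (X 1 * X 3 - C η₂ - (X 0) ^ a)
      = C η₂ * (X 1 * X 3 - 1 + (X 0) ^ a) := by
    simp only [hf, map_sub, map_mul, map_pow, aeval_X, hc,
      Matrix.cons_val_zero, Matrix.cons_val_one, Matrix.head_cons,
      Matrix.cons_val_three, Matrix.tail_cons, aeval_C, algebraMap_eq]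
    rw [mul_pow, ← C_pow, hua, C_neg]
    have h : (C v : MvPolynomial (Fin 4) K) * C v⁻¹ = 1 := by
      rw [← C_mul, mul_inv_cancel₀ hv0, C_1]
    linear_combination (C η₂ * X 1 * X 3 : MvPolynomial (Fin 4) K) * h
  -- the map of ideals
  have hmap : Ideal.map (e : MvPolynomial (Fin 4) K →+* MvPolynomial (Fin 4) K)
        (Ideal.span ({X 0 * X 2 - C η₁ - (X 1) ^ b, X 1 * X 3 - C η₂ - (X 0) ^ a} :
          Set (MvPolynomial (Fin 4) K)))
      = Ideal.span ({X 0 * X 2 - 1 + (X 1) ^ b, X 1 * X 3 - 1 + (X 0) ^ a} :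
          Set (MvPolynomial (Fin 4) K)) := by
    rw [Ideal.map_span, Set.image_pair]
    have e1 : (e : MvPolynomial (Fin 4) K →+* MvPolynomial (Fin 4) K)
        (X 0 * X 2 - C η₁ - (X 1) ^ b) = C η₁ * (X 0 * X 2 - 1 + (X 1) ^ b) := key1
    have e2 : (e : MvPolynomial (Fin 4) K →+* MvPolynomial (Fin 4) K)
        (X 1 * X 3 - C η₂ - (X 0) ^ a) = C η₂ * (X 1 * X 3 - 1 + (X 0) ^ a) := key2
    rw [e1, e2]
    apply le_antisymm
    · rw [Ideal.span_le]
      rintro x hx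
      simp only [Set.mem_insert_iff, Set.mem_singleton_iff] at hx
      rcases hx with rfl | rfl
      · exact Ideal.mul_mem_left _ _ (Ideal.subset_span (by simp))
      · exact Ideal.mul_mem_left _ _ (Ideal.subset_span (by simp))
    · rw [Ideal.span_le]
      rintro x hx
      simp only [Set.mem_insert_iff, Set.mem_singleton_iff] at hx
      rcases hx with rfl | rfl
      · have h1 : (X 0 * X 2 - 1 + (X 1) ^ b : MvPolynomial (Fin 4) K)
            = C η₁⁻¹ * (C η₁ * (X 0 * X 2 - 1 + (X 1) ^ b)) := by
          rw [← mul_assoc, ← C_mul, inv_mul_cancel₀ hη₁, C_1, one_mul]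
        have m1 : (C η₁ * (X 0 * X 2 - 1 + (X 1) ^ b) : MvPolynomial (Fin 4) K) ∈
            Ideal.span ({C η₁ * (X 0 * X 2 - 1 + (X 1) ^ b),
              C η₂ * (X 1 * X 3 - 1 + (X 0) ^ a)} : Set (MvPolynomial (Fin 4) K)) :=
          Ideal.subset_span (Set.mem_insert _ _)
        have := Ideal.mul_mem_left _ (C η₁⁻¹) m1
        rwa [← h1] at this
      · have h2 : (X 1 * X 3 - 1 + (X 0) ^ a : MvPolynomial (Fin 4) K)
            = C η₂⁻¹ * (C η₂ * (X 1 * X 3 - 1 + (X 0) ^ a)) := by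
          rw [← mul_assoc, ← C_mul, inv_mul_cancel₀ hη₂, C_1, one_mul]
        have m2 : (C η₂ * (X 1 * X 3 - 1 + (X 0) ^ a) : MvPolynomial (Fin 4) K) ∈
            Ideal.span ({C η₁ * (X 0 * X 2 - 1 + (X 1) ^ b),
              C η₂ * (X 1 * X 3 - 1 + (X 0) ^ a)} : Set (MvPolynomial (Fin 4) K)) :=
          Ideal.subset_span (Set.mem_insert_of_mem _ rfl)
        have := Ideal.mul_mem_left _ (C η₂⁻¹) m2
        rwa [← h2] at this
  exact ⟨Ideal.quotientEquivAlg _ _ e hmap.symm⟩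
end

section
/- Let K be an algebraically closed field of characteristic p > 0 (or p = 0) and let a, b be nonzero integers with a not divisible by p and b not divisible by p (if p > 0; always if p = 0). Then the variety V(w_1 z_1 - 1 + w_2^b, w_2 z_2 - 1 + w_1^a) ⊆ 𝔸⁴_K is smooth: the 2×2 minors of the Jacobian matrix of (g_1, g_2) = (w_1 z_1 - 1 + w_2^b, w_2 z_2 - 1 + w_1^a) have no common zero on the variety. -/
/-- If `a` and `b` are nonzero in `K` (i.e. not divisible by the characteristic),
the variety `V(w₁z₁ - 1 + w₂^b, w₂z₂ - 1 + w₁^a) ⊆ 𝔸⁴_K` is smooth: the 2×2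
minors of the Jacobian have no common zero on the variety. -/
theorem rank_two_smooth {K : Type*} [Field K] [IsAlgClosed K] (a b : ℕ)
    (ha : a ≠ 0) (hb : b ≠ 0) (haK : (a : K) ≠ 0) (hbK : (b : K) ≠ 0) :
    ∀ w₁ w₂ z₁ z₂ : K,
      ¬ (w₁ * z₁ - 1 + w₂ ^ b = 0 ∧ w₂ * z₂ - 1 + w₁ ^ a = 0 ∧
         z₁ * z₂ - (b * w₂ ^ (b - 1)) * (a * w₁ ^ (a - 1)) = 0 ∧
         z₁ * 0 - w₁ * (a * w₁ ^ (a - 1)) = 0 ∧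
         z₁ * w₂ - 0 * (a * w₁ ^ (a - 1)) = 0 ∧
         (b * w₂ ^ (b - 1)) * 0 - w₁ * z₂ = 0 ∧
         (b * w₂ ^ (b - 1)) * w₂ - 0 * z₂ = 0 ∧
         w₁ * w₂ - 0 * 0 = 0) := by
  rintro w₁ w₂ z₁ z₂ ⟨h1, h2, h3, h4, h5, h6, h7, h8⟩
  have hpa : w₁ * w₁ ^ (a - 1) = w₁ ^ a := by
    rw [← pow_succ']
    congr 1
    omega
  have hw1 : w₁ ^ a = 0 := by
    have : (a : K) * w₁ ^ a = 0 := by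
      rw [← hpa]; linear_combination -h4
    exact (mul_eq_zero.mp this).resolve_left haK
  have hw1' : w₁ = 0 := by
    have := pow_eq_zero_iff ha |>.mp hw1
    exact this
  have hw2b : w₂ ^ b = 1 := by
    rw [hw1'] at h1; linear_combination h1
  have hpb : w₂ ^ (b - 1) * w₂ = w₂ ^ b := by
    rw [← pow_succ]
    congr 1
    omega
  have : (b : K) * w₂ ^ b = 0 := by
    rw [← hpb]; linear_combination h7 - (b : K) * (mul_comm (w₂ ^ (b-1)) w₂ - mul_comm (w₂ ^ (b-1)) w₂)
  rw [hw2b, mul_one] at this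
  exact hbK this
end

section
/- Let K be a field and c_1, c_2, c_3, c_4 invertible elements of a commutative K-algebra R (e.g. R = K[c_1^{±1},...,c_4^{±1}]). Then the R-algebra R[x_1,...,x_4,y_1,...,y_4]/⟨x_1y_1 - c_1 - x_2, x_2y_2 - c_2x_1 - x_3², x_3y_3 - c_3x_2 - x_4, x_4y_4 - c_4x_3 - 1⟩ is isomorphic to R[x̃_1,...,x̃_4,ỹ_1,...,ỹ_4]/⟨x̃_1ỹ_1 - 1 - x̃_2, x̃_2ỹ_2 - x̃_1 - x̃_3², x̃_3ỹ_3 - x̃_2 - x̃_4, x̃_4ỹ_4 - x̃_3 - 1⟩, via the scaling x̃_1 = c_2c_4²x_1, x̃_2 = c_1^{-1}x_2, x̃_3 = c_4x_3, x̃_4 = c_1^{-1}c_3^{-1}x_4, ỹ_1 = c_1^{-1}c_2^{-1}c_4^{-2}y_1, ỹ_2 = c_1c_4²y_2, ỹ_3 = c_1^{-1}c_3^{-1}c_4^{-1}y_3, ỹ_4 = c_1c_3y_4. -/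
open MvPolynomial

private lemma vec8_five {α : Type*} (a b c d e f g h : α) :
    (![a,b,c,d,e,f,g,h] : Fin 8 → α) 5 = f := rfl

private lemma vec8_six {α : Type*} (a b c d e f g h : α) :
    (![a,b,c,d,e,f,g,h] : Fin 8 → α) 6 = g := rfl

private lemma vec8_seven {α : Type*} (a b c d e f g h : α) :
    (![a,b,c,d,e,f,g,h] : Fin 8 → α) 7 = h := rfl

private lemma unit_mul_aux {A : Type*} [CommRing A] {x y z w : A}
    (hxy : x * y = 1) (hzw : z * w = 1) : (x * z) * (y * w) = 1 := by
  linear_combination z * w * hxy + hzw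

open MvPolynomial in
/-- The F₄ cluster algebra with principal coefficients is a trivial family:
it is isomorphic over the coefficient ring `R` to the F₄ cluster algebra with
trivial coefficients.  Here `x_i = X (i-1)` and `y_i = X (3+i)` for `1 ≤ i ≤ 4`. -/
theorem typeF4_trivial_family {K R : Type*} [Field K] [CommRing R] [Algebra K R]
    (c₁ c₂ c₃ c₄ : R) (h₁ : IsUnit c₁) (h₂ : IsUnit c₂) (h₃ : IsUnit c₃)
    (h₄ : IsUnit c₄) :
    Nonempty
      ((MvPolynomial (Fin 8) R ⧸ Ideal.span
          ({X 0 * X 4 - C c₁ - X 1,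
            X 1 * X 5 - C c₂ * X 0 - (X 2) ^ 2,
            X 2 * X 6 - C c₃ * X 1 - X 3,
            X 3 * X 7 - C c₄ * X 2 - 1} : Set (MvPolynomial (Fin 8) R))) ≃ₐ[R]
        (MvPolynomial (Fin 8) R ⧸ Ideal.span
          ({X 0 * X 4 - 1 - X 1,
            X 1 * X 5 - X 0 - (X 2) ^ 2,
            X 2 * X 6 - X 1 - X 3,
            X 3 * X 7 - X 2 - 1} : Set (MvPolynomial (Fin 8) R)))) := by
  obtain ⟨d₁, hd₁⟩ := h₁.exists_right_inv
  obtain ⟨d₂, hd₂⟩ := h₂.exists_right_inv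
  obtain ⟨d₃, hd₃⟩ := h₃.exists_right_inv
  obtain ⟨d₄, hd₄⟩ := h₄.exists_right_inv
  have K₁ : (C c₁ : MvPolynomial (Fin 8) R) * C d₁ = 1 := by rw [← C_mul, hd₁, C_1]
  have K₂ : (C c₂ : MvPolynomial (Fin 8) R) * C d₂ = 1 := by rw [← C_mul, hd₂, C_1]
  have K₃ : (C c₃ : MvPolynomial (Fin 8) R) * C d₃ = 1 := by rw [← C_mul, hd₃, C_1]
  have K₄ : (C c₄ : MvPolynomial (Fin 8) R) * C d₄ = 1 := by rw [← C_mul, hd₄, C_1]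
  have P0 := unit_mul_aux (unit_mul_aux K₂ K₄) K₄
  have P3 := unit_mul_aux K₁ K₃
  have P4 := unit_mul_aux (unit_mul_aux (unit_mul_aux K₁ K₂) K₄) K₄
  have P5 := unit_mul_aux (unit_mul_aux K₁ K₄) K₄
  have P6 := unit_mul_aux (unit_mul_aux K₁ K₃) K₄
  have K44 := unit_mul_aux K₄ K₄
  let F : MvPolynomial (Fin 8) R →ₐ[R] MvPolynomial (Fin 8) R := aeval
    ![C d₂ * C d₄ * C d₄ * X 0, C c₁ * X 1, C d₄ * X 2, C c₁ * C c₃ * X 3,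
      C c₁ * C c₂ * C c₄ * C c₄ * X 4, C d₁ * C d₄ * C d₄ * X 5,
      C c₁ * C c₃ * C c₄ * X 6, C d₁ * C d₃ * X 7]
  let G : MvPolynomial (Fin 8) R →ₐ[R] MvPolynomial (Fin 8) R := aeval
    ![C c₂ * C c₄ * C c₄ * X 0, C d₁ * X 1, C c₄ * X 2, C d₁ * C d₃ * X 3,
      C d₁ * C d₂ * C d₄ * C d₄ * X 4, C c₁ * C c₄ * C c₄ * X 5,
      C d₁ * C d₃ * C d₄ * X 6, C c₁ * C c₃ * X 7]
  have hFG : F.comp G = AlgHom.id R (MvPolynomial (Fin 8) R) := by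
    apply MvPolynomial.algHom_ext
    intro i
    fin_cases i <;>
      simp [F, G, vec8_five, vec8_six, vec8_seven, algebraMap_eq, aeval_C, aeval_X]
    · linear_combination X (0 : Fin 8) * P0
    · linear_combination X (1 : Fin 8) * K₁
    · linear_combination X (2 : Fin 8) * K₄
    · linear_combination X (3 : Fin 8) * P3
    · linear_combination X (4 : Fin 8) * P4
    · linear_combination X (5 : Fin 8) * P5
    · linear_combination X (6 : Fin 8) * P6
    · linear_combination X (7 : Fin 8) * P3
  have hGF : G.comp F = AlgHom.id R (MvPolynomial (Fin 8) R) := by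
    apply MvPolynomial.algHom_ext
    intro i
    fin_cases i <;>
      simp [F, G, vec8_five, vec8_six, vec8_seven, algebraMap_eq, aeval_C, aeval_X]
    · linear_combination X (0 : Fin 8) * P0
    · linear_combination X (1 : Fin 8) * K₁
    · linear_combination X (2 : Fin 8) * K₄
    · linear_combination X (3 : Fin 8) * P3
    · linear_combination X (4 : Fin 8) * P4
    · linear_combination X (5 : Fin 8) * P5
    · linear_combination X (6 : Fin 8) * P6
    · linear_combination X (7 : Fin 8) * P3
  let e : MvPolynomial (Fin 8) R ≃ₐ[R] MvPolynomial (Fin 8) R := AlgEquiv.ofAlgHom F G hFG hGF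
  have hF1 : F (X 0 * X 4 - C c₁ - X 1) = C c₁ * (X 0 * X 4 - 1 - X 1) := by
    simp [F, vec8_five, vec8_six, vec8_seven, algebraMap_eq, aeval_C, aeval_X]
    linear_combination (C c₁ * X (0 : Fin 8) * X (4 : Fin 8)) * P0
  have hF2 : F (X 1 * X 5 - C c₂ * X 0 - (X 2) ^ 2)
      = C d₄ * C d₄ * (X 1 * X 5 - X 0 - (X 2) ^ 2) := by
    simp [F, vec8_five, vec8_six, vec8_seven, algebraMap_eq, aeval_C, aeval_X]
    linear_combination (C d₄ * C d₄ * X (1 : Fin 8) * X (5 : Fin 8)) * K₁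
      - (C d₄ * C d₄ * X (0 : Fin 8)) * K₂
  have hF3 : F (X 2 * X 6 - C c₃ * X 1 - X 3)
      = C c₁ * C c₃ * (X 2 * X 6 - X 1 - X 3) := by
    simp [F, vec8_five, vec8_six, vec8_seven, algebraMap_eq, aeval_C, aeval_X]
    linear_combination (C c₁ * C c₃ * X (2 : Fin 8) * X (6 : Fin 8)) * K₄
  have hF4 : F (X 3 * X 7 - C c₄ * X 2 - 1) = X 3 * X 7 - X 2 - 1 := by
    simp [F, vec8_five, vec8_six, vec8_seven, algebraMap_eq, aeval_C, aeval_X]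
    linear_combination (X (3 : Fin 8) * X (7 : Fin 8)) * P3 - X (2 : Fin 8) * K₄
  refine ⟨Ideal.quotientEquivAlg _ _ e ?_⟩
  have hmap : Ideal.map (e : MvPolynomial (Fin 8) R →+* MvPolynomial (Fin 8) R)
      (Ideal.span ({X 0 * X 4 - C c₁ - X 1, X 1 * X 5 - C c₂ * X 0 - (X 2) ^ 2,
        X 2 * X 6 - C c₃ * X 1 - X 3, X 3 * X 7 - C c₄ * X 2 - 1} : Set (MvPolynomial (Fin 8) R)))
      = Ideal.span ({C c₁ * (X 0 * X 4 - 1 - X 1),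
          C d₄ * C d₄ * (X 1 * X 5 - X 0 - (X 2) ^ 2),
          C c₁ * C c₃ * (X 2 * X 6 - X 1 - X 3),
          X 3 * X 7 - X 2 - 1} : Set (MvPolynomial (Fin 8) R)) := by
    rw [Ideal.map_span, Set.image_insert_eq, Set.image_insert_eq, Set.image_insert_eq,
      Set.image_singleton]
    have he : ∀ p : MvPolynomial (Fin 8) R, (e : MvPolynomial (Fin 8) R →+* MvPolynomial (Fin 8) R) p = F p := fun p => rfl
    rw [he, he, he, he, hF1, hF2, hF3, hF4]
  rw [hmap]
  apply le_antisymm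
  · rw [Ideal.span_le]
    rintro p hp
    simp only [Set.mem_insert_iff, Set.mem_singleton_iff] at hp
    rcases hp with rfl | rfl | rfl | rfl
    · have h : (X 0 * X 4 - 1 - X 1 : MvPolynomial (Fin 8) R)
          = C d₁ * (C c₁ * (X 0 * X 4 - 1 - X 1)) := by
        linear_combination (-(X (0 : Fin 8) * X (4 : Fin 8) - 1 - X (1 : Fin 8))) * K₁
      have m := Ideal.mul_mem_left
        (Ideal.span ({C c₁ * (X 0 * X 4 - 1 - X 1),
          C d₄ * C d₄ * (X 1 * X 5 - X 0 - (X 2) ^ 2),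
          C c₁ * C c₃ * (X 2 * X 6 - X 1 - X 3),
          X 3 * X 7 - X 2 - 1} : Set (MvPolynomial (Fin 8) R))) (C d₁)
        (Ideal.subset_span (Set.mem_insert _ _))
      rwa [← h] at m
    · have h : (X 1 * X 5 - X 0 - (X 2) ^ 2 : MvPolynomial (Fin 8) R)
          = C c₄ * C c₄ * (C d₄ * C d₄ * (X 1 * X 5 - X 0 - (X 2) ^ 2)) := by
        linear_combination (-(X (1 : Fin 8) * X (5 : Fin 8) - X (0 : Fin 8)
          - (X (2 : Fin 8)) ^ 2)) * K44
      have m := Ideal.mul_mem_left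
        (Ideal.span ({C c₁ * (X 0 * X 4 - 1 - X 1),
          C d₄ * C d₄ * (X 1 * X 5 - X 0 - (X 2) ^ 2),
          C c₁ * C c₃ * (X 2 * X 6 - X 1 - X 3),
          X 3 * X 7 - X 2 - 1} : Set (MvPolynomial (Fin 8) R))) (C c₄ * C c₄)
        (Ideal.subset_span (Set.mem_insert_of_mem _ (Set.mem_insert _ _)))
      rwa [← h] at m
    · have h : (X 2 * X 6 - X 1 - X 3 : MvPolynomial (Fin 8) R)
          = C d₁ * C d₃ * (C c₁ * C c₃ * (X 2 * X 6 - X 1 - X 3)) := by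
        linear_combination (-(X (2 : Fin 8) * X (6 : Fin 8) - X (1 : Fin 8)
          - X (3 : Fin 8))) * P3
      have m := Ideal.mul_mem_left
        (Ideal.span ({C c₁ * (X 0 * X 4 - 1 - X 1),
          C d₄ * C d₄ * (X 1 * X 5 - X 0 - (X 2) ^ 2),
          C c₁ * C c₃ * (X 2 * X 6 - X 1 - X 3),
          X 3 * X 7 - X 2 - 1} : Set (MvPolynomial (Fin 8) R))) (C d₁ * C d₃)
        (Ideal.subset_span (Set.mem_insert_of_mem _ (Set.mem_insert_of_mem _ (Set.mem_insert _ _))))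
      rwa [← h] at m
    · exact Ideal.subset_span (by simp)
  · rw [Ideal.span_le]
    rintro p hp
    simp only [Set.mem_insert_iff, Set.mem_singleton_iff] at hp
    rcases hp with rfl | rfl | rfl | rfl
    · exact Ideal.mul_mem_left _ _ (Ideal.subset_span (by simp))
    · exact Ideal.mul_mem_left _ _ (Ideal.subset_span (by simp))
    · exact Ideal.mul_mem_left _ _ (Ideal.subset_span (by simp))
    · exact Ideal.subset_span (by simp)
end

section
/- Let K be a field and c_1, c_2 invertible elements. The G_2-type cluster algebra with principal coefficients K[c_1^{±1}, c_2^{±1}][x_1, x_2, y_1, y_2]/⟨x_1y_1 - c_1 - x_2³, x_2y_2 - c_2x_1 - 1⟩ is isomorphic (over K[c_1^{±1}, c_2^{±1}]) to K[c_1^{±1}, c_2^{±1}][x, y, z]/⟨xyz - y - c_1 - x³⟩. -/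
/-! Since `c₂` is a unit, `x̃₁ = c₂x₁`, `ỹ₁ = c₂⁻¹y₁` are new variables, in which the second
relation reads `x̃₁ = x₂y₂ - 1`; eliminating `x̃₁` turns the first relation `x̃₁ỹ₁ - c₁ - x₂³` into
`x₂ỹ₁y₂ - ỹ₁ - c₁ - x₂³`. With `d = c₂⁻¹`, and the variables `x₁, x₂, y₁, y₂` resp. `x, y, z`
numbered from `0`, this is the pair of substitutions `x₁ ↦ d(xz - 1), x₂ ↦ x, y₁ ↦ c₂y, y₂ ↦ z`
and `x ↦ x₂, y ↦ dy₁, z ↦ y₂`, which respect the relations and are mutually inverse modulo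
them. -/

open MvPolynomial

namespace Ideal

variable {R A B : Type*} [CommSemiring R] [Ring A] [Ring B] [Algebra R A] [Algebra R B]
  {I : Ideal A} {J : Ideal B} [I.IsTwoSided] [J.IsTwoSided]

def quotientEquivAlgOfCompEq (f : A →ₐ[R] B) (g : B →ₐ[R] A)
    (hf : I ≤ J.comap f) (hg : J ≤ I.comap g)
    (hgf : (Quotient.mkₐ R I).comp (g.comp f) = Quotient.mkₐ R I)
    (hfg : (Quotient.mkₐ R J).comp (f.comp g) = Quotient.mkₐ R J) :
    (A ⧸ I) ≃ₐ[R] (B ⧸ J) :=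
  AlgEquiv.ofAlgHom (quotientMapₐ J f hf) (quotientMapₐ I g hg)
    (Quotient.algHom_ext R <| by
      rw [AlgHom.comp_assoc, quotient_map_comp_mkₐ, ← AlgHom.comp_assoc, quotient_map_comp_mkₐ,
        AlgHom.comp_assoc, hfg, AlgHom.id_comp])
    (Quotient.algHom_ext R <| by
      rw [AlgHom.comp_assoc, quotient_map_comp_mkₐ, ← AlgHom.comp_assoc, quotient_map_comp_mkₐ,
        AlgHom.comp_assoc, hgf, AlgHom.id_comp])

end Ideal

theorem MvPolynomial.C_mul_C_mul_cancel {σ A : Type*} [CommSemiring A] {c c' : A} (h : c * c' = 1)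
    (p : MvPolynomial σ A) : C c * (C c' * p) = p := by
  rw [← mul_assoc, ← C_mul, h, C_1, one_mul]

noncomputable section

namespace ClusterG2

variable {A : Type*} [CommRing A] (c₁ c₂ d : A)

def clusterIdeal : Ideal (MvPolynomial (Fin 4) A) :=
  Ideal.span {X 0 * X 2 - C c₁ - X 1 ^ 3, X 1 * X 3 - C c₂ * X 0 - 1}

def hypersurfaceIdeal : Ideal (MvPolynomial (Fin 3) A) :=
  Ideal.span {X 0 * X 1 * X 2 - X 1 - C c₁ - X 0 ^ 3}

def toHypersurface : MvPolynomial (Fin 4) A →ₐ[A] MvPolynomial (Fin 3) A :=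
  aeval ![C d * (X 0 * X 2 - 1), X 0, C c₂ * X 1, X 2]

def ofHypersurface : MvPolynomial (Fin 3) A →ₐ[A] MvPolynomial (Fin 4) A :=
  aeval ![X 1, C d * X 2, X 3]

variable {c₂ d}

theorem clusterIdeal_le_comap_toHypersurface (hd : d * c₂ = 1) :
    clusterIdeal c₁ c₂ ≤ (hypersurfaceIdeal c₁).comap (toHypersurface c₂ d) := by
  have h := C_mul_C_mul_cancel (σ := Fin 3) hd 1
  rw [clusterIdeal, Ideal.span_le, Set.insert_subset_iff, Set.singleton_subset_iff]
  constructor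
  · have : toHypersurface c₂ d (X 0 * X 2 - C c₁ - X 1 ^ 3) =
        X 0 * X 1 * X 2 - X 1 - C c₁ - X 0 ^ 3 := by
      simp only [toHypersurface, map_sub, map_mul, map_pow, aeval_X, aeval_C, algebraMap_eq,
        Matrix.cons_val]
      linear_combination (X 0 * X 2 - 1) * X 1 * h
    rw [SetLike.mem_coe, Ideal.mem_comap, this]
    exact Ideal.subset_span rfl
  · have : toHypersurface c₂ d (X 1 * X 3 - C c₂ * X 0 - 1) = 0 := by
      simp only [toHypersurface, map_sub, map_mul, map_one, aeval_X, aeval_C, algebraMap_eq,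
        Matrix.cons_val]
      linear_combination (1 - X 0 * X 2) * h
    rw [SetLike.mem_coe, Ideal.mem_comap, this]
    exact zero_mem _

theorem hypersurfaceIdeal_le_comap_ofHypersurface (hd : d * c₂ = 1) :
    hypersurfaceIdeal c₁ ≤ (clusterIdeal c₁ c₂).comap (ofHypersurface d) := by
  rw [hypersurfaceIdeal, Ideal.span_le, Set.singleton_subset_iff, SetLike.mem_coe, Ideal.mem_comap]
  have : ofHypersurface d (X 0 * X 1 * X 2 - X 1 - C c₁ - X 0 ^ 3) =
      C d * X 2 * (X 1 * X 3 - C c₂ * X 0 - 1) + (X 0 * X 2 - C c₁ - X 1 ^ 3) := by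
    simp only [ofHypersurface, map_sub, map_mul, map_pow, aeval_X, aeval_C, algebraMap_eq,
      Matrix.cons_val]
    linear_combination X 0 * X 2 * C_mul_C_mul_cancel (σ := Fin 4) hd 1
  rw [this]
  exact add_mem (Ideal.mul_mem_left _ _ (Ideal.subset_span (by simp)))
    (Ideal.subset_span (by simp))

theorem toHypersurface_comp_ofHypersurface (hd : d * c₂ = 1) :
    (toHypersurface c₂ d).comp (ofHypersurface d) = AlgHom.id A (MvPolynomial (Fin 3) A) := by
  refine algHom_ext fun i => ?_
  fin_cases i <;> simp [toHypersurface, ofHypersurface, C_mul_C_mul_cancel hd]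

theorem ofHypersurface_comp_toHypersurface (hd : d * c₂ = 1) :
    (Ideal.Quotient.mkₐ A (clusterIdeal c₁ c₂)).comp
        ((ofHypersurface d).comp (toHypersurface c₂ d)) =
      Ideal.Quotient.mkₐ A (clusterIdeal c₁ c₂) := by
  refine algHom_ext fun i => ?_
  simp only [AlgHom.comp_apply, Ideal.Quotient.mkₐ_eq_mk, Ideal.Quotient.mk_eq_mk_iff_sub_mem]
  fin_cases i
  · have : ofHypersurface d (toHypersurface c₂ d (X 0)) - X 0 =
        C d * (X 1 * X 3 - C c₂ * X 0 - 1) := by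
      simp only [toHypersurface, ofHypersurface, map_sub, map_mul, map_one, aeval_X, aeval_C,
        algebraMap_eq, Matrix.cons_val]
      linear_combination X 0 * C_mul_C_mul_cancel (σ := Fin 4) hd 1
    exact this ▸ Ideal.mul_mem_left _ _ (Ideal.subset_span (by simp))
  all_goals simp [toHypersurface, ofHypersurface, C_mul_C_mul_cancel ((mul_comm c₂ d).trans hd)]

def clusterEquivHypersurface (hd : d * c₂ = 1) :
    (MvPolynomial (Fin 4) A ⧸ clusterIdeal c₁ c₂) ≃ₐ[A]
      (MvPolynomial (Fin 3) A ⧸ hypersurfaceIdeal c₁) :=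
  Ideal.quotientEquivAlgOfCompEq (toHypersurface c₂ d) (ofHypersurface d)
    (clusterIdeal_le_comap_toHypersurface c₁ hd) (hypersurfaceIdeal_le_comap_ofHypersurface c₁ hd)
    (ofHypersurface_comp_toHypersurface c₁ hd)
    (by rw [toHypersurface_comp_ofHypersurface hd, AlgHom.comp_id])

end ClusterG2

end

open MvPolynomial in
theorem typeG2_hypersurface_presentation_general {A : Type*} [CommRing A]
    (c₁ c₂ : A) (h₂ : IsUnit c₂) :
    Nonempty
      ((MvPolynomial (Fin 4) A ⧸ Ideal.span
          ({X 0 * X 2 - C c₁ - (X 1) ^ 3, X 1 * X 3 - C c₂ * X 0 - 1} :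
            Set (MvPolynomial (Fin 4) A))) ≃ₐ[A]
        (MvPolynomial (Fin 3) A ⧸ Ideal.span
          ({X 0 * X 1 * X 2 - X 1 - C c₁ - (X 0) ^ 3} :
            Set (MvPolynomial (Fin 3) A)))) := by
  obtain ⟨u, rfl⟩ := h₂
  exact ⟨ClusterG2.clusterEquivHypersurface c₁ u.inv_mul⟩

open MvPolynomial in
/-- The G₂-type cluster algebra with principal coefficients
`A[x₁,x₂,y₁,y₂]/⟨x₁y₁ - c₁ - x₂³, x₂y₂ - c₂x₁ - 1⟩` is isomorphic over the
coefficient ring `A` to `A[x,y,z]/⟨xyz - y - c₁ - x³⟩`. -/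
theorem typeG2_hypersurface_presentation {K A : Type*} [Field K] [CommRing A]
    [Algebra K A] (c₁ c₂ : A) (h₁ : IsUnit c₁) (h₂ : IsUnit c₂) :
    Nonempty
      ((MvPolynomial (Fin 4) A ⧸ Ideal.span
          ({X 0 * X 2 - C c₁ - (X 1) ^ 3, X 1 * X 3 - C c₂ * X 0 - 1} :
            Set (MvPolynomial (Fin 4) A))) ≃ₐ[A]
        (MvPolynomial (Fin 3) A ⧸ Ideal.span
          ({X 0 * X 1 * X 2 - X 1 - C c₁ - (X 0) ^ 3} :
            Set (MvPolynomial (Fin 3) A)))) :=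
  typeG2_hypersurface_presentation_general c₁ c₂ h₂
end
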